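/- arXiv:2101.09408 — 6 statements merged into one kernel-verified Lean document; each statement's English description precedes it below -/
import Mathlib

section
/- Permutation commutes with map: for any f : a → b and xs : List a, perm (xs.map f) = (perm xs).map (List.map f), where perm is defined by perm [] = [[]] and perm (x :: xs) = (perm xs).bind (insert x), with insert x [] = [[x]] and insert x (y :: xs) = (x :: y :: xs) :: (insert x xs).map (y :: ·). -/
def ins {a : Type*} (x : a) : List a → List (List a)
  | [] => [[x]]
  | y :: xs => (x :: y :: xs) :: (ins x xs).map (y :: ·)

def perm {a : Type*} : List a → List (List a)
  | [] => [[]]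
  | x :: xs => (perm xs).flatMap (ins x)

lemma ins_map {a b : Type*} (f : a → b) (x : a) (ys : List a) :
    ins (f x) (ys.map f) = (ins x ys).map (List.map f) := by
  induction ys with
  | nil => simp [ins]
  | cons y ys ih => simp [ins, ih, Function.comp]

theorem perm_map {a b : Type*} (f : a → b) (xs : List a) :
    perm (xs.map f) = (perm xs).map (List.map f) := by
  induction xs with
  | nil => simp [perm]
  | cons x xs ih =>
    simp only [List.map_cons, perm, ih, List.flatMap_map, List.map_flatMap]
    congr 1
    funext ys
    exact ins_map f x ys
end

section
/- Let (⊗) : a → b → b, z : b, and (⊕) : b → b → b be associative on img (foldr (⊗) z) with z as identity on that image. Then foldr (⊗) z satisfies foldr (⊗) z (xs ++ ys) = foldr (⊗) z xs ⊕ foldr (⊗) z ys for all xs ys if and only if x ⊗ (y ⊕ w) = (x ⊗ y) ⊕ w for all x : a and all y, w in img (foldr (⊗) z). -/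
theorem foldr_hom_iff {a b : Type*} (ot : a → b → b) (z : b) (op : b → b → b)
    (hassoc : ∀ x y w : b, (∃ us, List.foldr ot z us = x) → (∃ us, List.foldr ot z us = y) →
      (∃ us, List.foldr ot z us = w) → op (op x y) w = op x (op y w))
    (hid : ∀ y : b, (∃ us, List.foldr ot z us = y) → op y z = y ∧ op z y = y) :
    (∀ xs ys : List a, List.foldr ot z (xs ++ ys) = op (List.foldr ot z xs) (List.foldr ot z ys))
      ↔ (∀ (x : a) (y w : b), (∃ us, List.foldr ot z us = y) → (∃ us, List.foldr ot z us = w) →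
          ot x (op y w) = op (ot x y) w) := by
  constructor
  · rintro h x y w ⟨us, rfl⟩ ⟨vs, rfl⟩
    have h1 := h us vs
    have h2 := h (x :: us) vs
    simp only [List.cons_append, List.foldr_cons] at h2
    rw [← h1, ← h2]
  · intro h xs ys
    induction xs with
    | nil => simpa using (hid _ ⟨ys, rfl⟩).2.symm
    | cons x xs ih =>
      simp only [List.cons_append, List.foldr_cons, ih]
      exact h x _ _ ⟨xs, rfl⟩ ⟨ys, rfl⟩
end

section
/- Deterministic aggregation: define aggregate z (⊗) (⊕) xss = (perm (xss.map (List.foldr (⊗) z))).map (List.foldr (⊕) z), where perm enumerates permutations via non-deterministic insertion in the list monad. If (⊕) is associative and commutative, then aggregate z (⊗) (⊕) xss is a constant list, all of whose elements equal List.foldr (⊕) z (xss.map (List.foldr (⊗) z)); in particular every element of aggregate z (⊗) (⊕) xss equals List.foldr (⊕) z (xss.map (List.foldr (⊗) z)). -/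
def aggregate {a b : Type*} (z : b) (ot : a → b → b) (op : b → b → b)
    (xss : List (List a)) : List b :=
  (perm (xss.map (List.foldr ot z))).map (List.foldr op z)

lemma ins_perm {a : Type*} (x : a) : ∀ (ys l : List a), l ∈ ins x ys → l.Perm (x :: ys)
  | [], l, h => by simp [ins] at h; simp [h]
  | y :: ys, l, h => by
    simp [ins] at h
    rcases h with h | ⟨m, hm, rfl⟩
    · simp [h]
    · exact ((ins_perm x ys m hm).cons y).trans (List.Perm.swap x y ys)

lemma perm_perm {a : Type*} : ∀ (xs l : List a), l ∈ perm xs → l.Perm xs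
  | [], l, h => by simp [perm] at h; simp [h]
  | x :: xs, l, h => by
    simp [perm, List.mem_flatMap] at h
    obtain ⟨m, hm, hl⟩ := h
    exact (ins_perm x m l hl).trans ((perm_perm xs m hm).cons x)

theorem aggregate_det {a b : Type*} (z : b) (ot : a → b → b) (op : b → b → b)
    (hassoc : ∀ x y w : b, op (op x y) w = op x (op y w))
    (hcomm : ∀ x y : b, op x y = op y x) (xss : List (List a)) :
    ∀ r ∈ aggregate z ot op xss, r = List.foldr op z (xss.map (List.foldr ot z)) := by
  intro r hr
  simp only [aggregate, List.mem_map] at hr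
  obtain ⟨l, hl, rfl⟩ := hr
  have key : ∀ l₁ l₂ : List b, l₁.Perm l₂ → l₁.foldr op z = l₂.foldr op z := by
    intro l₁ l₂ p
    induction p with
    | nil => rfl
    | cons x _ ih => simp [ih]
    | swap x y l => simp [← hassoc, hcomm x y]
    | trans _ _ ih₁ ih₂ => rw [ih₁, ih₂]
  exact key _ _ (perm_perm _ l hl)
end

section
/- If aggregation is deterministic, the reduce of any permutation agrees with the direct fold: suppose that for every xss : List (List a) and every result r in aggregate z (⊗) (⊕) xss we have r = List.foldr (⊗) z xss.join. Then for any xss and any yss that is a permutation of xss, List.foldr (⊗) z xss.join = List.foldr (⊕) z (xss.map (List.foldr (⊗) z)) = List.foldr (⊕) z (yss.map (List.foldr (⊗) z)). -/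
lemma mem_ins {a : Type*} (x : a) : ∀ (l1 l2 : List a), (l1 ++ x :: l2) ∈ ins x (l1 ++ l2)
  | [], l2 => by cases l2 <;> simp [ins]
  | y :: l1, l2 => by
    simp only [List.cons_append, ins, List.mem_cons, List.mem_map]
    exact Or.inr ⟨l1 ++ x :: l2, mem_ins x l1 l2, rfl⟩

lemma mem_perm {a : Type*} : ∀ {m l : List a}, l.Perm m → l ∈ perm m
  | [], l, h => by simp [perm, h.eq_nil]
  | x :: xs, l, h => by
    have hx : x ∈ l := h.symm.subset (by simp)
    obtain ⟨l1, l2, rfl⟩ := List.append_of_mem hx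
    have h2 : (l1 ++ l2).Perm xs := by
      have := (List.perm_middle (a := x) (l₁ := l1) (l₂ := l2)).symm.trans h
      exact this.cons_inv
    simp only [perm, List.mem_flatMap]
    exact ⟨l1 ++ l2, mem_perm h2, mem_ins x l1 l2⟩

theorem aggregate_det_reasoning {a b : Type*} (z : b) (ot : a → b → b) (op : b → b → b)
    (hdet : ∀ (xss : List (List a)) (r : b), r ∈ aggregate z ot op xss →
      r = List.foldr ot z xss.flatten) :
    ∀ (xss yss : List (List a)), List.Perm yss xss →
      List.foldr ot z xss.flatten = List.foldr op z (xss.map (List.foldr ot z)) ∧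
      List.foldr op z (xss.map (List.foldr ot z))
        = List.foldr op z (yss.map (List.foldr ot z)) := by
  intro xss yss hp
  set f := List.foldr ot z with hf
  have h1 : List.foldr op z (xss.map f) ∈ aggregate z ot op xss :=
    List.mem_map.2 ⟨xss.map f, mem_perm (List.Perm.refl _), rfl⟩
  have h2 : List.foldr op z (yss.map f) ∈ aggregate z ot op xss :=
    List.mem_map.2 ⟨yss.map f, mem_perm (hp.map f), rfl⟩
  have e1 := hdet xss _ h1
  have e2 := hdet xss _ h2
  exact ⟨e1.symm, e1.trans e2.symm⟩
end

section
/- Determinism forces a commutative monoid: suppose for every xss : List (List a), every element of aggregate z (⊗) (⊕) xss equals List.foldr (⊗) z xss.join. Then (⊕), restricted to the image of List.foldr (⊗) z, is associative, commutative, and has z as a two-sided identity: for all x, y, w of the form List.foldr (⊗) z us, we have y ⊕ z = y, z ⊕ y = y, x ⊕ y = y ⊕ x, and x ⊕ (y ⊕ w) = (x ⊕ y) ⊕ w. -/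
theorem aggregate_cmonoid {a b : Type*} (z : b) (ot : a → b → b) (op : b → b → b)
    (hdet : ∀ (xss : List (List a)) (r : b), r ∈ aggregate z ot op xss →
      r = List.foldr ot z xss.flatten) :
    ∀ x y w : b, (∃ us, List.foldr ot z us = x) → (∃ us, List.foldr ot z us = y) →
      (∃ us, List.foldr ot z us = w) →
      op y z = y ∧ op z y = y ∧ op x y = op y x ∧ op x (op y w) = op (op x y) w := by
  rintro x y w ⟨us, rfl⟩ ⟨vs, rfl⟩ ⟨ws, rfl⟩
  -- right identity on image
  have h1 : ∀ ls : List a, op (List.foldr ot z ls) z = List.foldr ot z ls := by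
    intro ls
    have := hdet [ls] (op (List.foldr ot z ls) z) (by simp [aggregate, perm, ins])
    simpa using this
  -- product of two lists
  have h2 : ∀ ls ms : List a,
      op (List.foldr ot z ls) (List.foldr ot z ms) = List.foldr ot z (ls ++ ms) := by
    intro ls ms
    have := hdet [ls, ms] (op (List.foldr ot z ls) (op (List.foldr ot z ms) z))
      (by simp [aggregate, perm, ins])
    rw [h1 ms] at this
    simpa using this
  have h2' : ∀ ls ms : List a,
      op (List.foldr ot z ms) (List.foldr ot z ls) = List.foldr ot z (ls ++ ms) := by
    intro ls ms
    have := hdet [ls, ms] (op (List.foldr ot z ms) (op (List.foldr ot z ls) z))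
      (by simp [aggregate, perm, ins])
    rw [h1 ls] at this
    simpa using this
  -- left identity
  have hz : op z (List.foldr ot z vs) = List.foldr ot z vs := by
    have := h2' vs []
    simpa using this
  refine ⟨h1 vs, hz, by rw [h2 us vs, h2' us vs], ?_⟩
  -- associativity
  have ha := hdet [us, vs, ws]
    (op (List.foldr ot z us) (op (List.foldr ot z vs) (op (List.foldr ot z ws) z)))
    (by simp [aggregate, perm, ins])
  rw [h1 ws] at ha
  have hb := hdet [us, vs, ws]
    (op (List.foldr ot z ws) (op (List.foldr ot z us) (op (List.foldr ot z vs) z)))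
    (by simp [aggregate, perm, ins])
  rw [h1 vs] at hb
  rw [h2 us vs] at hb
  -- op x (op y w) = flatten = op w (foldr (us++vs)) = op (foldr (us++vs)) w = op (op x y) w
  have hc := h2' (us ++ vs) ws
  have hd := h2 (us ++ vs) ws
  rw [← h2 us vs] at hc hd
  simp only [List.flatten, List.append_eq, List.append_nil, List.append_assoc] at ha hb hc hd
  rw [ha, ← hd]
end

section
/- Determinism forces homomorphism: suppose for every xss : List (List a), every element of aggregate z (⊗) (⊕) xss equals List.foldr (⊗) z xss.join. Then List.foldr (⊗) z is a list homomorphism for (⊕, z): List.foldr (⊗) z [] = z, List.foldr (⊗) z [x] = x ⊗ z, and List.foldr (⊗) z (xs ++ ys) = List.foldr (⊗) z xs ⊕ List.foldr (⊗) z ys for all xs ys. -/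
theorem aggregate_hom {a b : Type*} (z : b) (ot : a → b → b) (op : b → b → b)
    (hdet : ∀ (xss : List (List a)) (r : b), r ∈ aggregate z ot op xss →
      r = List.foldr ot z xss.flatten) :
    List.foldr ot z ([] : List a) = z ∧
    (∀ x : a, List.foldr ot z [x] = ot x z) ∧
    (∀ xs ys : List a,
      List.foldr ot z (xs ++ ys) = op (List.foldr ot z xs) (List.foldr ot z ys)) := by
  have hsingle : ∀ ys : List a, op (List.foldr ot z ys) z = List.foldr ot z ys := by
    intro ys
    have := hdet [ys] (op (List.foldr ot z ys) z) (by
      simp [aggregate, perm, ins])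
    simpa using this
  refine ⟨rfl, fun x => rfl, fun xs ys => ?_⟩
  have hpair := hdet [xs, ys] (op (List.foldr ot z xs) (op (List.foldr ot z ys) z)) (by
    simp [aggregate, perm, ins])
  rw [hsingle ys] at hpair
  simpa using hpair.symm
end
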